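/- In the numbers game on a connected GCM graph (Γ, M) with n ≥ 1 nodes played from a nonzero dominant position λ (all λ_i ≥ 0, some λ_i > 0), any terminating game sequence fires every node of Γ at least once. -/

import Mathlib

/-- A generalized Cartan matrix. -/
def IsGCM {n : ℕ} (M : Matrix (Fin n) (Fin n) ℤ) : Prop :=
  (∀ i, M i i = 2) ∧ (∀ i j, i ≠ j → M i j ≤ 0) ∧
    (∀ i j, i ≠ j → (M i j = 0 ↔ M j i = 0))

/-- Firing node `i` from position `lam`. -/
def fireZ {n : ℕ} (M : Matrix (Fin n) (Fin n) ℤ) (i : Fin n) (lam : Fin n → ℝ) :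
    Fin n → ℝ :=
  fun j => lam j - (M i j : ℝ) * lam i

/-- Legality of a firing sequence. -/
def legalSeq {n : ℕ} (M : Matrix (Fin n) (Fin n) ℤ) :
    (Fin n → ℝ) → List (Fin n) → Prop
  | _, [] => True
  | lam, i :: s => 0 < lam i ∧ legalSeq M (fireZ M i lam) s

/-- Resulting position of a firing sequence. -/
def playSeq {n : ℕ} (M : Matrix (Fin n) (Fin n) ℤ) :
    (Fin n → ℝ) → List (Fin n) → (Fin n → ℝ)
  | lam, [] => lam
  | lam, i :: s => playSeq M (fireZ M i lam) s

/-!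
Firing a node never decreases the other coordinates, and strictly increases the coordinates
of its neighbours. Hence if some node `a` is never fired, its coordinate only grows, and if a
neighbour of `a` is fired it grows strictly, from `λ_a ≥ 0` to a positive value, so the game
has not terminated. By connectedness an unfired node therefore forces every node to be unfired,
and then the positive coordinate of `λ` stays positive.
-/

section NumbersGame

variable {n : ℕ} {M : Matrix (Fin n) (Fin n) ℤ}

lemma IsGCM.lt_zero_of_adj (hM : IsGCM M) {a b : Fin n}
    (hab : (SimpleGraph.fromRel fun i j => M i j ≠ 0).Adj a b) : M a b < 0 := by
  obtain ⟨hne, hab | hba⟩ := SimpleGraph.fromRel_adj .. |>.1 hab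
  · exact (hM.2.1 a b hne).lt_of_ne hab
  · exact (hM.2.1 a b hne).lt_of_ne fun h => hba ((hM.2.2 a b hne).1 h)

lemma le_fireZ_of_ne (hoff : ∀ i j, i ≠ j → M i j ≤ 0) {lam : Fin n → ℝ} {i j : Fin n}
    (hj : 0 ≤ lam j) (hij : i ≠ j) : lam i ≤ fireZ M j lam i := by
  have : (M j i : ℝ) ≤ 0 := by exact_mod_cast hoff j i hij.symm
  simp only [fireZ]
  nlinarith

lemma lt_fireZ_of_neg {lam : Fin n → ℝ} {i j : Fin n} (hj : 0 < lam j) (hji : M j i < 0) :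
    lam i < fireZ M j lam i := by
  have : (M j i : ℝ) < 0 := by exact_mod_cast hji
  simp only [fireZ]
  nlinarith

lemma le_playSeq_of_not_mem (hoff : ∀ i j, i ≠ j → M i j ≤ 0) {lam : Fin n → ℝ}
    {s : List (Fin n)} (hleg : legalSeq M lam s) {i : Fin n} (hi : i ∉ s) :
    lam i ≤ playSeq M lam s i := by
  induction s generalizing lam with
  | nil => exact le_rfl
  | cons k t ih =>
    rw [List.mem_cons, not_or] at hi
    exact (le_fireZ_of_ne hoff hleg.1.le hi.1).trans (ih hleg.2 hi.2)

lemma lt_playSeq_of_not_mem (hoff : ∀ i j, i ≠ j → M i j ≤ 0) {lam : Fin n → ℝ}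
    {s : List (Fin n)} (hleg : legalSeq M lam s) {i j : Fin n} (hi : i ∉ s) (hj : j ∈ s)
    (hji : M j i < 0) : lam i < playSeq M lam s i := by
  induction s generalizing lam with
  | nil => simp at hj
  | cons k t ih =>
    rw [List.mem_cons, not_or] at hi
    obtain rfl | hjt := List.mem_cons.1 hj
    · exact (lt_fireZ_of_neg hleg.1 hji).trans_le (le_playSeq_of_not_mem hoff hleg.2 hi.2)
    · exact (le_fireZ_of_ne hoff hleg.1.le hi.1).trans_lt (ih hleg.2 hi.2 hjt)

end NumbersGame

lemma SimpleGraph.Reachable.mem_of_adj_closed {V : Type*} {G : SimpleGraph V} {S : Set V}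
    (hS : ∀ ⦃a b⦄, G.Adj a b → a ∈ S → b ∈ S) {u v : V} (huv : G.Reachable u v)
    (hu : u ∈ S) : v ∈ S := by
  rw [SimpleGraph.reachable_iff_reflTransGen] at huv
  induction huv with
  | refl => exact hu
  | tail _ hab ih => exact hS hab ih

theorem stmt15_general {n : ℕ} (M : Matrix (Fin n) (Fin n) ℤ)
    (hM : IsGCM M)
    (hconn : (SimpleGraph.fromRel (fun i j => M i j ≠ 0)).Connected)
    (lam : Fin n → ℝ) (hdom : ∀ i, 0 ≤ lam i) (hnz : ∃ i, 0 < lam i)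
    (s : List (Fin n)) (hleg : legalSeq M lam s)
    (hterm : ∀ j, playSeq M lam s j ≤ 0) :
    ∀ i, i ∈ s := by
  have hoff := hM.2.1
  have hunfired_closed : ∀ ⦃a b⦄, (SimpleGraph.fromRel (fun i j => M i j ≠ 0)).Adj a b →
      a ∈ {k | k ∉ s} → b ∈ {k | k ∉ s} := by
    intro a b hab ha hb
    have := lt_playSeq_of_not_mem hoff hleg ha hb (hM.lt_zero_of_adj hab.symm)
    linarith [hterm a, hdom a]
  by_contra! ⟨i, hi⟩
  obtain ⟨j, hj⟩ := hnz
  have hj_unfired : j ∉ s := (hconn.preconnected i j).mem_of_adj_closed hunfired_closed hi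
  linarith [le_playSeq_of_not_mem hoff hleg hj_unfired, hterm j]

/-- In the numbers game on a connected GCM graph (nodes `i ≠ j` adjacent iff
`M i j ≠ 0`) with `n ≥ 1` nodes, played from a nonzero dominant position, any
terminating game sequence fires every node at least once. -/
theorem stmt15 {n : ℕ} (hn : 0 < n) (M : Matrix (Fin n) (Fin n) ℤ)
    (hM : IsGCM M)
    (hconn : (SimpleGraph.fromRel (fun i j => M i j ≠ 0)).Connected)
    (lam : Fin n → ℝ) (hdom : ∀ i, 0 ≤ lam i) (hnz : ∃ i, 0 < lam i)
    (s : List (Fin n)) (hleg : legalSeq M lam s)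
    (hterm : ∀ j, playSeq M lam s j ≤ 0) :
    ∀ i, i ∈ s :=
  stmt15_general M hM hconn lam hdom hnz s hleg hterm
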